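/- Consider the Dickson nearfield setup and R-subgroups. Let m be a positive integer and let T be an R-subgroup of F^m. Then |T| = (q^n)^k for some integer k with 0 ≤ k ≤ m. -/
import Mathlib


/-- `(q, n)` is a Dickson pair: `q` is a prime power, every prime divisor of `n`
divides `q - 1`, and if `q ≡ 3 (mod 4)` then `4` does not divide `n`. -/
def IsDicksonPair (q n : ℕ) : Prop :=
  0 < q ∧ 0 < n ∧ (∃ p l : ℕ, Nat.Prime p ∧ 0 < l ∧ q = p ^ l) ∧
    (∀ p : ℕ, Nat.Prime p → p ∣ n → p ∣ q - 1) ∧ (q % 4 = 3 → ¬ 4 ∣ n)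

/-- `[k]_q = 1 + q + q^2 + ⋯ + q^(k-1)`. -/
def dq (q k : ℕ) : ℕ := ∑ i ∈ Finset.range k, q ^ i

/-- `x` lies in the coset `g^([k]_q) • H` where `H = ⟨g^n⟩`. -/
def inCoset {F : Type*} [Field F] (g : F) (q n k : ℕ) (x : F) : Prop :=
  ∃ j : ℕ, x = g ^ dq q k * (g ^ n) ^ j

/-- `T ⊆ F^m` is an `R`-subgroup: an additive subgroup closed under the
componentwise Dickson nearfield scalar multiplication `circ` on the right. -/
def IsRSubgroup {F : Type*} [Field F] {m : ℕ} (circ : F → F → F)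
    (T : Set (Fin m → F)) : Prop :=
  0 ∈ T ∧ (∀ a ∈ T, ∀ b ∈ T, a + b ∈ T) ∧ (∀ a ∈ T, -a ∈ T) ∧
    ∀ v ∈ T, ∀ r : F, (fun i => circ (v i) r) ∈ T

lemma aux_dq_zero (q : ℕ) : dq q 0 = 0 := rfl

lemma aux_dq_succ (q k : ℕ) : dq q (k+1) = dq q k + q^k := Finset.sum_range_succ _ _

lemma aux_dq_add (q a b : ℕ) : dq q (a+b) = dq q a + q^a * dq q b := by
  induction b with
  | zero => simp [aux_dq_zero]
  | succ b ih =>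
    have h : a + (b+1) = (a+b)+1 := by omega
    rw [h, aux_dq_succ, aux_dq_succ, ih, pow_add]
    ring

lemma aux_dq_mul (q k e : ℕ) : dq q (k*e) = dq q k * dq (q^k) e := by
  induction e with
  | zero => simp [aux_dq_zero]
  | succ e ih =>
    have h : k * (e+1) = k*e + k := by ring
    rw [h, aux_dq_add, aux_dq_succ, ih, ← pow_mul]
    ring

lemma aux_geom (q k : ℕ) (hq : 1 ≤ q) : q ^ k = (q - 1) * dq q k + 1 := by
  induction k with
  | zero => simp [aux_dq_zero]
  | succ k ih =>
    obtain ⟨r, rfl⟩ : ∃ r, q = r + 1 := ⟨q - 1, by omega⟩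
    rw [aux_dq_succ, pow_succ, ih]
    simp only [Nat.add_sub_cancel]
    ring

lemma aux_dq_pos (q d : ℕ) (hq : 1 ≤ q) (hd : 1 ≤ d) : 0 < dq q d := by
  obtain ⟨d', rfl⟩ : ∃ d', d = d' + 1 := ⟨d - 1, by omega⟩
  rw [aux_dq_succ]
  have := Nat.one_le_pow d' q hq
  omega

lemma aux_binom (t i : ℕ) : ∃ c, (1+t)^i = 1 + i*t + t^2*c := by
  induction i with
  | zero => exact ⟨0, by ring⟩
  | succ i ih =>
    obtain ⟨c, hc⟩ := ih
    exact ⟨i + c + t*c, by rw [pow_succ, hc]; ring⟩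

lemma aux_dq_gauss (t k : ℕ) : ∃ C, dq (1+t) k = k + (k.choose 2) * t + t^2 * C := by
  induction k with
  | zero => exact ⟨0, by simp [aux_dq_zero]⟩
  | succ k ih =>
    obtain ⟨C, hC⟩ := ih
    obtain ⟨c, hc⟩ := aux_binom t k
    refine ⟨C + c, ?_⟩
    rw [aux_dq_succ, hC, hc]
    have hch : (k+1).choose 2 = k.choose 2 + k := by
      rw [Nat.choose_succ_succ]
      simp [Nat.choose_one_right]
      omega
    rw [hch]
    ring

lemma aux_dq_p (p t : ℕ) (hp : p.Prime) (ht : p ∣ t) (h4 : p = 2 → 4 ∣ t) :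
    ∃ u, dq (1+t) p = p * u ∧ u % p = 1 := by
  rcases hp.eq_two_or_odd' with h2 | hodd
  · subst h2
    obtain ⟨s, rfl⟩ := h4 rfl
    have : dq (1 + 4*s) 2 = 2 * (1 + 2*s) := by
      show (∑ i ∈ Finset.range 2, (1+4*s)^i) = _
      simp [Finset.sum_range_succ]
      ring
    exact ⟨1 + 2*s, this, by omega⟩
  · obtain ⟨C, hC⟩ := aux_dq_gauss t p
    obtain ⟨t', rfl⟩ := ht
    have hch : p.choose 2 = p * ((p-1)/2) := by
      rw [Nat.choose_two_right, Nat.mul_div_assoc]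
      exact (Nat.Odd.sub_odd hodd odd_one).two_dvd
    refine ⟨1 + p * (((p-1)/2) * t' + t'^2*C), ?_, ?_⟩
    · rw [hC, hch]; ring
    · rw [Nat.add_mul_mod_self_left]
      exact Nat.one_mod_eq_one.mpr hp.one_lt.ne'

lemma aux_mod_one (p t : ℕ) (hp : 1 < p) (ht : p ∣ t) (e : ℕ) : dq (1+t) e ≡ e [MOD p] := by
  induction e with
  | zero => simp [aux_dq_zero, Nat.ModEq.refl]
  | succ e ih =>
    rw [aux_dq_succ]
    have h0 : (1:ℕ) ≡ 1+t [MOD p] := (Nat.modEq_iff_dvd' (by omega)).mpr (by simpa using ht)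
    have h1 : (1+t)^e ≡ 1 [MOD p] := by simpa using h0.symm.pow e
    exact ih.add h1

lemma aux_key (p : ℕ) (hp : p.Prime) :
    ∀ a t d : ℕ, p ∣ t → (p = 2 → a ≤ 1 ∨ 4 ∣ t) → (p^a ∣ dq (1+t) d ↔ p^a ∣ d) := by
  intro a
  induction a with
  | zero => intro t d _ _; simp
  | succ a ih =>
    intro t d ht h4
    have h1 : ∀ e, (p ∣ dq (1+t) e ↔ p ∣ e) := by
      intro e
      have h' : dq (1+t) e % p = e % p := aux_mod_one p t hp.one_lt ht e
      rw [Nat.dvd_iff_mod_eq_zero, Nat.dvd_iff_mod_eq_zero, h']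
    by_cases ha : a = 0
    · subst ha; simpa using h1 d
    -- a ≥ 1
    have h4' : p = 2 → 4 ∣ t := fun h2 => (h4 h2).resolve_left (by omega)
    obtain ⟨u, hu, humod⟩ := aux_dq_p p t hp ht h4'
    have hpu : ¬ p ∣ u := by
      intro h; rw [Nat.dvd_iff_mod_eq_zero] at h; omega
    set t2 := (1+t)^p - 1 with ht2def
    have ht2eq : (1+t)^p = 1 + t2 := by
      have : 1 ≤ (1+t)^p := Nat.one_le_pow _ _ (by omega)
      omega
    have hgeo := aux_geom (1+t) p (by omega)
    have ht2dq : t2 = t * dq (1+t) p := by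
      simp only [Nat.add_sub_cancel_left] at hgeo; omega
    have hpt2 : p ∣ t2 := ht2dq ▸ Dvd.dvd.mul_right ht _
    have h4t2 : p = 2 → a ≤ 1 ∨ 4 ∣ t2 := by
      intro h2
      right
      obtain ⟨s, rfl⟩ := h2 ▸ ht
      have hsq : (1+2*s)^2 = 1 + (4*(s + s*s)) := by ring
      rw [h2] at ht2def
      omega
    have hcop : Nat.Coprime (p^a) u := Nat.Coprime.pow_left a ((Nat.Prime.coprime_iff_not_dvd hp).mpr hpu)
    constructor
    · intro hd
      have hpd : p ∣ d := (h1 d).mp ((dvd_pow_self p (Nat.succ_ne_zero a)).trans hd)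
      obtain ⟨e, rfl⟩ := hpd
      rw [aux_dq_mul, hu, ht2eq] at hd
      have h6 : p^(a+1) = p * p^a := by rw [pow_succ]; ring
      have h7 : p^a ∣ u * dq (1+t2) e := by
        have : p * p^a ∣ p * (u * dq (1+t2) e) := by
          rw [← h6, ← mul_assoc]; exact hd
        exact (mul_dvd_mul_iff_left (hp.pos.ne' : p ≠ 0)).mp this
      have h8 : p^a ∣ dq (1+t2) e := hcop.dvd_of_dvd_mul_left h7
      have h9 : p^a ∣ e := (ih t2 e hpt2 h4t2).mp h8
      exact h6 ▸ mul_dvd_mul_left p h9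
    · intro hd
      obtain ⟨e, rfl⟩ : ∃ e, d = p * e := (dvd_pow_self p (Nat.succ_ne_zero a)).trans hd
      have h6 : p^(a+1) = p * p^a := by rw [pow_succ]; ring
      have h9 : p^a ∣ e := by
        have : p * p^a ∣ p * e := by rw [← h6]; exact hd
        exact (mul_dvd_mul_iff_left (hp.pos.ne' : p ≠ 0)).mp this
      have h8 : p^a ∣ dq (1+t2) e := (ih t2 e hpt2 h4t2).mpr h9
      rw [aux_dq_mul, hu, ht2eq, h6, mul_assoc]
      exact mul_dvd_mul dvd_rfl (Dvd.dvd.mul_left h8 u)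

def IsDicksonPair' (q n : ℕ) : Prop :=
  0 < q ∧ 0 < n ∧ (∃ p l : ℕ, Nat.Prime p ∧ 0 < l ∧ q = p ^ l) ∧
    (∀ p : ℕ, Nat.Prime p → p ∣ n → p ∣ q - 1) ∧ (q % 4 = 3 → ¬ 4 ∣ n)

lemma aux_dickson_dvd {q n : ℕ} (hqn : IsDicksonPair' q n) (d : ℕ) : n ∣ dq q d ↔ n ∣ d := by
  obtain ⟨hq0, hn0, ⟨p0, l, hp0, hl0, hq⟩, hdiv, h4⟩ := hqn
  have hq2 : 2 ≤ q := by
    rw [hq]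
    calc 2 ≤ p0 := hp0.two_le
    _ ≤ p0 ^ l := Nat.le_self_pow hl0.ne' p0
  clear hq
  obtain ⟨t, rfl⟩ : ∃ t, q = 1 + t := ⟨q - 1, by omega⟩
  have hqt : (1 + t) - 1 = t := by omega
  rw [hqt] at hdiv
  rcases Nat.eq_zero_or_pos d with rfl | hd0
  · simp [aux_dq_zero]
  have hdqne : dq (1+t) d ≠ 0 := (aux_dq_pos _ _ (by omega) hd0).ne'
  have key : ∀ p a : ℕ, p.Prime → p ^ a ∣ n → (p^a ∣ dq (1+t) d ↔ p^a ∣ d) := by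
    intro p a hp hpan
    rcases Nat.eq_zero_or_pos a with rfl | ha0
    · simp
    have hpn : p ∣ n := dvd_trans (dvd_pow_self p ha0.ne') hpan
    have hpt : p ∣ t := hdiv p hp hpn
    apply aux_key p hp a t d hpt
    intro h2
    subst h2
    have ht2 : t % 2 = 0 := by
      rcases hpt with ⟨c, rfl⟩; omega
    by_cases h41 : t % 4 = 0
    · right; omega
    · left
      have hq3 : (1+t) % 4 = 3 := by omega
      by_contra hle
      have h2a : (4:ℕ) ∣ 2^a := by
        have ha2 : 2 ≤ a := by omega
        calc (4:ℕ) = 2^2 := rfl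
        _ ∣ 2^a := pow_dvd_pow 2 ha2
      exact (h4 hq3) (h2a.trans hpan)
  constructor
  · intro h
    apply (Nat.factorization_prime_le_iff_dvd hn0.ne' hd0.ne').mp
    intro p hp
    have h1 : p ^ (n.factorization p) ∣ n := Nat.ordProj_dvd n p
    have h3 : p ^ (n.factorization p) ∣ d := (key p _ hp h1).mp (h1.trans h)
    exact (Nat.Prime.pow_dvd_iff_le_factorization hp hd0.ne').mp h3
  · intro h
    apply (Nat.factorization_prime_le_iff_dvd hn0.ne' hdqne).mp
    intro p hp
    have h1 : p ^ (n.factorization p) ∣ n := Nat.ordProj_dvd n p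
    have h3 : p ^ (n.factorization p) ∣ dq (1+t) d := (key p _ hp h1).mpr (h1.trans h)
    exact (Nat.Prime.pow_dvd_iff_le_factorization hp hdqne).mp h3

lemma aux_coprime {q n : ℕ} (hqn : IsDicksonPair' q n) : Nat.Coprime q n := by
  obtain ⟨hq0, hn0, hpp, hdiv, h4⟩ := hqn
  rw [Nat.coprime_iff_gcd_eq_one]
  by_contra h
  have h0 : Nat.gcd q n ≠ 0 := Nat.gcd_ne_zero_left hq0.ne'
  have hp : (Nat.gcd q n).minFac.Prime := Nat.minFac_prime h
  set p := (Nat.gcd q n).minFac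
  have hpq : p ∣ q := (Nat.minFac_dvd _).trans (Nat.gcd_dvd_left _ _)
  have hpn : p ∣ n := (Nat.minFac_dvd _).trans (Nat.gcd_dvd_right _ _)
  have h1 : p ∣ 1 := by
    have h2 := Nat.dvd_sub hpq (hdiv p hp hpn)
    rwa [Nat.sub_sub_self (by omega)] at h2
  have := hp.two_le
  have := Nat.le_of_dvd one_pos h1
  omega

/-- Dickson nearfield setup: every `R`-subgroup of `F^m` has cardinality
`(q^n)^k` for some `k ≤ m`. -/
theorem card_RSubgroup {F : Type*} [Field F] [Fintype F]
    (q n : ℕ) (hqn : IsDicksonPair q n)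
    (hcard : Fintype.card F = q ^ n)
    (g : F) (hg : ∀ x : F, x ≠ 0 → ∃ j : ℕ, x = g ^ j)
    (circ : F → F → F)
    (hcirc0 : ∀ lam : F, circ 0 lam = 0)
    (hcirc : ∀ k : ℕ, 1 ≤ k → k ≤ n → ∀ x : F, inCoset g q n k x →
      ∀ lam : F, circ x lam = x * lam ^ q ^ k)
    (m : ℕ) (hm : 0 < m) (T : Set (Fin m → F)) (hT : IsRSubgroup circ T) :
    ∃ k : ℕ, k ≤ m ∧ T.ncard = (q ^ n) ^ k := by
  classical
  obtain ⟨hT0, hTadd, hTneg, hTcirc⟩ := hT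
  obtain ⟨hq0, hn0, ⟨p0, l, hp0, hl0, hq⟩, hdiv, h4⟩ := id hqn
  have hq2 : 2 ≤ q := by
    rw [hq]
    calc 2 ≤ p0 := hp0.two_le
    _ ≤ p0 ^ l := Nat.le_self_pow hl0.ne' p0
  have hqn2 : 2 ≤ q ^ n := by
    calc 2 ≤ q := hq2
    _ = q^1 := (pow_one q).symm
    _ ≤ q^n := Nat.pow_le_pow_right (by omega) hn0
  set d0 := l * n with hd0
  have hd0pos : 0 < d0 := Nat.mul_pos hl0 hn0
  have hqnp : q ^ n = p0 ^ d0 := by rw [hq, ← pow_mul]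
  -- Lagrange
  let TA : AddSubgroup (Fin m → F) :=
    { carrier := T
      add_mem' := fun {a} {b} ha hb => hTadd a ha b hb
      zero_mem' := hT0
      neg_mem' := fun {a} ha => hTneg a ha }
  haveI : Nonempty ↥TA := ⟨⟨0, hT0⟩⟩
  have hdvd0 : Nat.card TA ∣ Nat.card (Fin m → F) :=
    AddSubgroup.card_addSubgroup_dvd_card TA
  have hNT : Nat.card TA = T.ncard := Nat.card_coe_set_eq T
  have hNG : Nat.card (Fin m → F) = (q ^ n) ^ m := by
    rw [Nat.card_eq_fintype_card, Fintype.card_fun, hcard, Fintype.card_fin]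
  rw [hNT, hNG] at hdvd0
  have hdvd1 : T.ncard ∣ p0 ^ (d0 * m) := by rwa [hqnp, ← pow_mul] at hdvd0
  obtain ⟨e, hele, hTe⟩ := (Nat.dvd_prime_pow hp0).mp hdvd1
  -- congruence
  have hcong : (q ^ n - 1) ∣ (T.ncard - 1) := by
    by_cases hgz : g = 0
    · -- degenerate case : F = {0,1}, q^n = 2
      have hall : ∀ x : F, x = 0 ∨ x = 1 := by
        intro x
        by_cases hx : x = 0
        · exact Or.inl hx
        · obtain ⟨j, hj⟩ := hg x hx
          cases j with
          | zero => right; simpa using hj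
          | succ j =>
            exfalso; apply hx
            rw [hj, hgz, zero_pow (Nat.succ_ne_zero j)]
      have hle2 : Fintype.card F ≤ 2 := by
        have hsub2 : (Finset.univ : Finset F) ⊆ {0, 1} := by
          intro x _
          rcases hall x with rfl | rfl <;> simp
        calc Fintype.card F = (Finset.univ : Finset F).card := rfl
        _ ≤ ({0, 1} : Finset F).card := Finset.card_le_card hsub2
        _ ≤ 2 := le_trans (Finset.card_insert_le _ _) (by simp)
      have h2 : q ^ n = 2 := by rw [← hcard]; omega
      rw [h2]
      simp
    · -- main case
      have horder : g ^ (q^n - 1) = 1 := by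
        have h := FiniteField.pow_card_sub_one_eq_one g hgz
        rwa [hcard] at h
      have hxqn : ∀ x : F, x ^ (q^n) = x := by
        intro x
        have h := FiniteField.pow_card x
        rwa [hcard] at h
      have hdickson : IsDicksonPair' q n := ⟨hq0, hn0, ⟨p0, l, hp0, hl0, hq⟩, hdiv, h4⟩
      have hdqn : n ∣ dq q n := (aux_dickson_dvd hdickson n).mpr dvd_rfl
      have hgeo : q ^ n = dq q n * (q - 1) + 1 := by
        rw [aux_geom q n (by omega : 1 ≤ q), mul_comm]
      have hMn : n ∣ q^n - 1 := hdqn.trans ⟨q - 1, by omega⟩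
      have hcop := aux_coprime hdickson
      -- characteristic and Frobenius injectivity
      have hchar : ringChar F = p0 := by
        obtain ⟨np, hrp, hcardp⟩ := FiniteField.card F (ringChar F)
        have h1 : ringChar F ∣ p0 ^ d0 := by
          rw [← hqnp, ← hcard, hcardp]
          exact dvd_pow_self _ np.pos.ne'
        exact (Nat.prime_dvd_prime_iff_eq hrp hp0).mp (hrp.dvd_of_dvd_pow h1)
      haveI : Fact (Nat.Prime p0) := ⟨hp0⟩
      haveI hcharF : CharP F p0 := hchar ▸ ringChar.charP F
      have hfrobinj : ∀ (kk : ℕ) (x y : F), x ^ q ^ kk = y ^ q ^ kk → x = y := by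
        intro kk x y hxy
        have h1 : (x - y) ^ q ^ kk = x ^ q ^ kk - y ^ q ^ kk := by
          rw [hq, ← pow_mul]
          exact sub_pow_char_pow x y _
        rw [hxy, sub_self] at h1
        have h2 : x - y = 0 :=
          (pow_eq_zero_iff ((Nat.pow_pos (by omega : 0 < q)).ne' : q ^ kk ≠ 0)).mp h1
        exact sub_eq_zero.mp h2
      -- residues of dq are injective hence surjective
      have hinj : ∀ k1 k2 : ℕ, 1 ≤ k1 → k1 ≤ k2 → k2 ≤ n → dq q k1 % n = dq q k2 % n → k1 = k2 := by
        intro k1 k2 h1 hle h2 hmod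
        have hsplit : dq q k2 = dq q k1 + q^k1 * dq q (k2 - k1) := by
          rw [← aux_dq_add]; congr 1; omega
        have hle' : dq q k1 ≤ dq q k2 := by omega
        have hdvd : n ∣ dq q k2 - dq q k1 := (Nat.modEq_iff_dvd' hle').mp hmod
        have hdvd2 : n ∣ dq q (k2-k1) * q^k1 := by
          have h3 : dq q k2 - dq q k1 = dq q (k2-k1) * q^k1 := by
            rw [mul_comm]; omega
          rwa [h3] at hdvd
        have hcop2 : Nat.Coprime n (q^k1) := Nat.Coprime.pow_right k1 hcop.symm
        have hdvd3 : n ∣ dq q (k2 - k1) := hcop2.dvd_of_dvd_mul_right hdvd2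
        have hdvd4 : n ∣ k2 - k1 := (aux_dickson_dvd hdickson _).mp hdvd3
        rcases Nat.eq_zero_or_pos (k2 - k1) with h5 | h5
        · omega
        · have := Nat.le_of_dvd h5 hdvd4
          omega
      haveI : NeZero n := ⟨hn0.ne'⟩
      have hsurj : ∀ j : ℕ, ∃ kk, 1 ≤ kk ∧ kk ≤ n ∧ j % n = dq q kk % n := by
        have hbij : Function.Bijective (fun i : Fin n => (((dq q (i+1) : ℕ)) : ZMod n)) := by
          rw [Fintype.bijective_iff_injective_and_card]
          constructor
          · intro i1 i2 hi
            have h := (ZMod.natCast_eq_natCast_iff' _ _ _).mp hi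
            have h2 : (i1:ℕ)+1 = (i2:ℕ)+1 := by
              rcases le_total ((i1:ℕ)+1) ((i2:ℕ)+1) with hle | hle
              · exact hinj _ _ (by omega) hle (by omega) h
              · exact (hinj _ _ (by omega) hle (by omega) h.symm).symm
            exact Fin.ext (by omega)
          · simp [ZMod.card]
        intro j
        obtain ⟨i, hi⟩ := hbij.surjective ((j : ZMod n))
        have h := (ZMod.natCast_eq_natCast_iff' _ _ _).mp hi
        exact ⟨(i:ℕ)+1, by omega, by have := i.isLt; omega, h.symm⟩
      -- every nonzero element lies in some coset
      have hN1 : ∀ x : F, x ≠ 0 → ∃ kk, 1 ≤ kk ∧ kk ≤ n ∧ inCoset g q n kk x := by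
        intro x hx
        obtain ⟨j, hj⟩ := hg x hx
        obtain ⟨kk, hk1, hkn, hkmod⟩ := hsurj j
        refine ⟨kk, hk1, hkn, ?_⟩
        obtain ⟨Mc, hMc⟩ := hMn
        have hgJ : g ^ (j + (q^n - 1) * dq q kk) = x := by
          rw [pow_add, pow_mul, horder, one_pow, mul_one, hj]
        have hJk : dq q kk ≤ j + (q^n - 1) * dq q kk := by
          have h1 : dq q kk ≤ (q^n - 1) * dq q kk := Nat.le_mul_of_pos_left _ (by omega)
          omega
        have hmod2 : (j + (q^n - 1) * dq q kk) % n = dq q kk % n := by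
          rw [hMc, mul_assoc, Nat.add_mul_mod_self_left]
          exact hkmod
        have hdvdJ : n ∣ (j + (q^n - 1) * dq q kk) - dq q kk :=
          (Nat.modEq_iff_dvd' hJk).mp hmod2.symm
        obtain ⟨j', hj'⟩ := hdvdJ
        refine ⟨j', ?_⟩
        rw [← pow_mul, ← pow_add, ← hgJ]
        congr 1
        omega
      -- choose a coset index for every element
      have hKex : ∀ x : F, ∃ kk, (x ≠ 0 → 1 ≤ kk ∧ kk ≤ n ∧ inCoset g q n kk x) := by
        intro x
        by_cases hx : x = 0
        · exact ⟨1, fun h => absurd hx h⟩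
        · obtain ⟨kk, h⟩ := hN1 x hx
          exact ⟨kk, fun _ => h⟩
      choose K hK1 using hKex
      have hKcirc : ∀ x : F, x ≠ 0 → ∀ lam : F, circ x lam = x * lam ^ q ^ K x := by
        intro x hx lam
        exact hcirc _ (hK1 x hx).1 (hK1 x hx).2.1 x (hK1 x hx).2.2 lam
      -- reduction of Frobenius exponents mod n
      have hexp0 : ∀ (t : F) (a c : ℕ), t ^ q ^ (a + n*c) = t ^ q ^ a := by
        intro t a c
        induction c with
        | zero => simp
        | succ c ih =>
          have h1 : a + n*(c+1) = (a + n*c) + n := by ring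
          rw [h1, pow_add, pow_mul', hxqn]
          exact ih
      have hexp : ∀ (t : F) (a b : ℕ), a % n = b % n → t ^ q ^ a = t ^ q ^ b := by
        intro t a b hab
        rcases le_total a b with hle | hle
        · obtain ⟨c, hc⟩ := (Nat.modEq_iff_dvd' hle).mp hab
          have h1 : b = a + n * c := by omega
          rw [h1, hexp0]
        · obtain ⟨c, hc⟩ := (Nat.modEq_iff_dvd' hle).mp hab.symm
          have h1 : a = b + n * c := by omega
          rw [h1, hexp0]
      -- coset of a product
      have hprod : ∀ x r : F, x ≠ 0 → r ≠ 0 → ∃ κ, 1 ≤ κ ∧ κ ≤ n ∧ κ % n = (K x + K r) % n ∧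
          inCoset g q n κ (x * r ^ q ^ (K x)) := by
        intro x r hx hr
        obtain ⟨hx1, hxn, jx, hjx⟩ := hK1 x hx
        obtain ⟨hr1, hrn, jr, hjr⟩ := hK1 r hr
        set a := K x with ha
        set b := K r with hb
        have hsplitdq : ∃ κ c, 1 ≤ κ ∧ κ ≤ n ∧ κ % n = (a + b) % n ∧
            dq q (a+b) = dq q κ + n * c := by
          by_cases hcase : a + b ≤ n
          · exact ⟨a + b, 0, by omega, hcase, rfl, by omega⟩
          · obtain ⟨w, hw⟩ := hdqn
            refine ⟨a + b - n, q^(a+b-n) * w, by omega, by omega, ?_, ?_⟩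
            · have h1 : a + b = (a + b - n) + n := by omega
              conv_rhs => rw [h1]
              rw [Nat.add_mod_right]
            · have h2 : dq q (a + b) = dq q ((a + b - n) + n) := by
                congr 1
                omega
              rw [h2, aux_dq_add, hw]
              ring
        obtain ⟨κ, c, hκ1, hκn, hκmod, hc⟩ := hsplitdq
        have e1 : dq q a + q^a * dq q b = dq q κ + n * c := by
          rw [← aux_dq_add]
          exact hc
        refine ⟨κ, hκ1, hκn, hκmod, ⟨c + jx + q^a * jr, ?_⟩⟩
        rw [hjx, hjr]
        simp only [mul_pow, ← pow_mul, ← pow_add]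
        congr 1
        zify
        zify at e1
        linear_combination e1
      -- the circ-orbit of a vector
      set Wv : (Fin m → F) → Set (Fin m → F) :=
        fun v => Set.range (fun r => fun i => circ (v i) r) with hWvdef
      have hcirczero : ∀ x : F, circ x 0 = 0 := by
        intro x
        by_cases hx : x = 0
        · rw [hx]; exact hcirc0 0
        · rw [hKcirc x hx, zero_pow ((Nat.pow_pos (by omega : 0 < q)).ne' : q ^ K x ≠ 0),
            mul_zero]
      have hW0 : ∀ v : Fin m → F, (0 : Fin m → F) ∈ Wv v := by
        intro v
        refine ⟨0, ?_⟩
        funext i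
        show circ (v i) 0 = 0
        exact hcirczero (v i)
      have hWself : ∀ v : Fin m → F, v ∈ Wv v := by
        intro v
        refine ⟨1, ?_⟩
        funext i
        show circ (v i) 1 = v i
        by_cases hvi : v i = 0
        · rw [hvi, hcirc0]
        · rw [hKcirc _ hvi, one_pow, mul_one]
      have hWT : ∀ v ∈ T, Wv v ⊆ T := by
        rintro v hv x ⟨r, rfl⟩
        exact hTcirc v hv r
      have hWcard : ∀ v : Fin m → F, v ≠ 0 → (Wv v).ncard = q^n := by
        intro v hv
        obtain ⟨i0, hi0⟩ : ∃ i, v i ≠ 0 := by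
          by_contra h
          push_neg at h
          exact hv (funext h)
        have hinj2 : Function.Injective (fun r : F => fun i => circ (v i) r) := by
          intro r s hrs
          have h1 : circ (v i0) r = circ (v i0) s := congrFun hrs i0
          rw [hKcirc _ hi0, hKcirc _ hi0] at h1
          exact hfrobinj _ r s (mul_left_cancel₀ hi0 h1)
        rw [hWvdef]
        rw [← Nat.card_coe_set_eq, Nat.card_range_of_injective hinj2,
          Nat.card_eq_fintype_card, hcard]
      have hWmul : ∀ v, v ∈ T → v ≠ 0 → ∀ r : F, r ≠ 0 →
          Wv (fun i => circ (v i) r) = Wv v := by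
        intro v hvT hv r hr
        obtain ⟨i0, hi0⟩ : ∃ i, v i ≠ 0 := by
          by_contra h
          push_neg at h
          exact hv (funext h)
        have hwi0 : circ (v i0) r ≠ 0 := by
          rw [hKcirc _ hi0]
          exact mul_ne_zero hi0 (pow_ne_zero _ hr)
        have hwne : (fun i => circ (v i) r) ≠ (0 : Fin m → F) := by
          intro h
          exact hwi0 (congrFun h i0)
        have hsub : Wv (fun i => circ (v i) r) ⊆ Wv v := by
          rintro z ⟨t, rfl⟩
          refine ⟨r * t ^ q ^ (K r), ?_⟩
          funext i
          simp only
          by_cases hvi : v i = 0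
          · simp only [hvi, hcirc0]
          · obtain ⟨κ, hκ1, hκn, hκmod, hκcos⟩ := hprod (v i) r hvi hr
            have h1 : circ (circ (v i) r) t = (v i * r ^ q ^ K (v i)) * t ^ q ^ κ := by
              rw [hKcirc _ hvi]
              exact hcirc κ hκ1 hκn _ hκcos t
            have h2 : t ^ q ^ κ = t ^ q ^ (K (v i) + K r) := hexp t _ _ hκmod
            have h3 : (t ^ q ^ K r) ^ q ^ K (v i) = t ^ q ^ (K (v i) + K r) := by
              rw [← pow_mul, ← pow_add, Nat.add_comm]
            rw [h1, h2, hKcirc _ hvi, mul_pow, h3, mul_assoc]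
        have heq : (Wv (fun i => circ (v i) r)).ncard = (Wv v).ncard := by
          rw [hWcard _ hwne, hWcard v hv]
        exact Set.eq_of_subset_of_ncard_le hsub heq.symm.le (Set.toFinite _)
      -- counting
      set s : Finset (Fin m → F) := Finset.univ.filter (fun x => x ∈ T ∧ x ≠ 0) with hs
      set tt : Finset (Set (Fin m → F)) := s.image Wv with htt
      have hmaps : ∀ x ∈ s, Wv x ∈ tt := fun x hx => Finset.mem_image_of_mem _ hx
      have hcount := Finset.card_eq_sum_card_fiberwise hmaps
      have hsetcard : ∀ S : Set (Fin m → F),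
          (Finset.univ.filter (fun x => x ∈ S)).card = S.ncard := by
        intro S
        rw [Set.ncard_eq_toFinset_card']
        congr 1
        ext x
        simp [Set.mem_toFinset]
      have hfiber : ∀ b ∈ tt, (s.filter (fun x => Wv x = b)).card = q^n - 1 := by
        intro b hb
        obtain ⟨v0, hv0s, rfl⟩ := Finset.mem_image.mp hb
        have hv0 : v0 ∈ T ∧ v0 ≠ 0 := by
          have h := Finset.mem_filter.mp (hs ▸ hv0s)
          simpa using h.2
        have hfe : s.filter (fun x => Wv x = Wv v0) =
            Finset.univ.filter (fun x => x ∈ (Wv v0 \ {0} : Set (Fin m → F))) := by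
          ext x
          constructor
          · intro hx
            obtain ⟨hxs, hWx⟩ := Finset.mem_filter.mp hx
            have hx2 : x ∈ T ∧ x ≠ 0 := by
              have h := Finset.mem_filter.mp (hs ▸ hxs)
              simpa using h.2
            refine Finset.mem_filter.mpr ⟨Finset.mem_univ _, ?_⟩
            exact ⟨hWx ▸ hWself x, hx2.2⟩
          · intro hx
            have hx2 := (Finset.mem_filter.mp hx).2
            obtain ⟨hxW, hx0⟩ := hx2
            have hx0' : x ≠ 0 := hx0
            obtain ⟨r, hr⟩ := hxW
            have hr0 : r ≠ 0 := by
              rintro rfl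
              apply hx0'
              rw [← hr]
              funext i
              exact hcirczero _
            refine Finset.mem_filter.mpr ⟨?_, ?_⟩
            · rw [hs]
              refine Finset.mem_filter.mpr ⟨Finset.mem_univ _, ?_⟩
              exact ⟨hWT v0 hv0.1 ⟨r, hr⟩, hx0'⟩
            · rw [← hr]
              exact hWmul v0 hv0.1 hv0.2 r hr0
        rw [hfe]
        have h9 := hsetcard (Wv v0 \ {0})
        rw [Set.ncard_diff_singleton_of_mem (hW0 v0), hWcard v0 hv0.2] at h9
        convert h9 using 2
        ext x
        simp
      have hTsplit : T.ncard = s.card + 1 := by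
        have h1 : s.card = (T \ {0} : Set (Fin m → F)).ncard := by
          rw [← hsetcard]
          congr 1
          ext x
          simp [hs, Set.mem_diff]
        have h2 := Set.ncard_diff_singleton_add_one hT0 (Set.toFinite _)
        rw [h1]
        omega
      have hsc : s.card = tt.card * (q^n - 1) := by
        rw [hcount, Finset.sum_congr rfl hfiber, Finset.sum_const, smul_eq_mul]
      refine ⟨tt.card, ?_⟩
      rw [mul_comm]
      omega
  -- final arithmetic
  set k := e / d0 with hk
  have hkm : k ≤ m := by
    have h1 : e ≤ d0 * m := hele
    have : k ≤ (d0 * m) / d0 := Nat.div_le_div_right h1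
    rwa [Nat.mul_div_cancel_left _ hd0pos] at this
  refine ⟨k, hkm, ?_⟩
  set s0 := e % d0 with hs0def
  have hes : e = d0 * k + s0 := by rw [hk, hs0def]; exact (Nat.div_add_mod e d0).symm
  have hM : q^n - 1 ∣ p0^e - 1 := hTe ▸ hcong
  have h1 : q^n - 1 ∣ (p0^(d0*k)) - 1 := by
    have h2 := Nat.sub_dvd_pow_sub_pow (p0^d0) 1 k
    rw [one_pow, ← pow_mul] at h2
    rwa [hqnp]
  have hge1 : 1 ≤ p0 ^ (d0*k) := Nat.one_le_pow _ _ hp0.pos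
  have hge2 : 1 ≤ p0 ^ e := Nat.one_le_pow _ _ hp0.pos
  have h2 : q^n - 1 ∣ p0^e - p0^(d0*k) := by
    have h3 := Nat.dvd_sub hM h1
    have h4 : p0^e - 1 - (p0^(d0*k) - 1) = p0^e - p0^(d0*k) := by omega
    rwa [h4] at h3
  have h5 : p0^e - p0^(d0*k) = p0^(d0*k) * (p0^s0 - 1) := by
    rw [Nat.mul_sub_left_distrib, mul_one, ← pow_add, ← hes]
  have h6 : q^n - 1 ∣ p0^(d0*k) * (p0^s0 - 1) := h5 ▸ h2
  have hcop : Nat.Coprime (q^n - 1) (p0^(d0*k)) := by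
    have h7 : Nat.Coprime (q^n - 1) (p0^d0) := by
      rw [← hqnp]
      have hdl := Nat.dvd_sub (Nat.gcd_dvd_right (q^n - 1) (q^n)) (Nat.gcd_dvd_left (q^n - 1) (q^n))
      rw [Nat.sub_sub_self (by omega)] at hdl
      exact Nat.dvd_one.mp hdl
    have h8 : Nat.Coprime (q^n - 1) p0 :=
      (Nat.coprime_pow_right_iff hd0pos _ _).mp h7
    exact h8.pow_right _
  have h8 : q^n - 1 ∣ p0^s0 - 1 := hcop.dvd_of_dvd_mul_left h6
  have hs0lt : s0 < d0 := Nat.mod_lt _ hd0pos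
  have h9 : p0^s0 - 1 < q^n - 1 := by
    have h10 : p0^s0 < p0^d0 := Nat.pow_lt_pow_right hp0.one_lt hs0lt
    have h11 : 1 ≤ p0 ^ s0 := Nat.one_le_pow _ _ hp0.pos
    omega
  have h11 : p0^s0 - 1 = 0 := Nat.eq_zero_of_dvd_of_lt h8 h9
  have hs0 : s0 = 0 := by
    by_contra hs
    have := Nat.one_lt_pow hs hp0.one_lt
    omega
  rw [hTe, hes, hs0, add_zero, pow_mul, ← hqnp]
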